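/- arXiv:1302.2703 — 4 statements merged into one kernel-verified Lean document; each statement's English description precedes it below -/
import Mathlib

section
/- Let G be a finite simple graph whose k vertices of largest degree form a set Q such that Σ_{q∈Q} deg(q) = k(k−1) + Σ_{p∉Q} min{k, deg(p)}. Then Q is a clique in G. -/
/-!
Split the degree of each `q ∈ Q` into its neighbours inside and outside `Q`. The inside
counts sum to at most `k (k - 1)`; by double counting, the outside counts sum to
`∑_{p ∉ Q} |N(p) ∩ Q| ≤ ∑_{p ∉ Q} min k (deg p)`. Equality therefore forces every `q ∈ Q`
to be adjacent to all `k - 1` other vertices of `Q`.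
-/

open SimpleGraph Finset

/-- `s` is an independent set in `G`. -/
def IsIndepSet {α : Type*} (G : SimpleGraph α) (s : Set α) : Prop :=
  s.Pairwise fun a b => ¬ G.Adj a b

/-- `(G, A, B)` is a splitted graph: `A` an independent set and `B` a clique
partitioning the vertex set of `G`. -/
def IsSplitted {α : Type*} (G : SimpleGraph α) (A B : Set α) : Prop :=
  _root_.IsIndepSet G A ∧ G.IsClique B ∧ A ∪ B = Set.univ ∧ Disjoint A B

/-- `G` is a split graph. -/
def IsSplitGraph {α : Type*} (G : SimpleGraph α) : Prop :=
  ∃ A B : Set α, IsSplitted G A B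

/-- Tyshkevich composition `(G, A, B) ∘ H`: the disjoint union of `G` and `H`
together with all edges between the clique `B` and the vertices of `H`. -/
def comp {α β : Type*} (G : SimpleGraph α) (B : Set α) (H : SimpleGraph β) :
    SimpleGraph (α ⊕ β) where
  Adj x y :=
    match x, y with
    | Sum.inl a, Sum.inl a' => G.Adj a a'
    | Sum.inr b, Sum.inr b' => H.Adj b b'
    | Sum.inl a, Sum.inr _ => a ∈ B
    | Sum.inr _, Sum.inl a => a ∈ B
  symm := ⟨by
    rintro (a | b) (a' | b') h
    · exact G.adj_symm h
    · exact h
    · exact h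
    · exact H.adj_symm h⟩
  loopless := ⟨by
    rintro (a | b) h
    · exact G.irrefl h
    · exact H.irrefl h⟩

/-- The degree of a vertex, as the cardinality of its neighborhood. -/
noncomputable def deg {α : Type*} (G : SimpleGraph α) (v : α) : ℕ :=
  (G.neighborSet v).ncard

/-- The disjoint union of two edges. -/
def twoK2 : SimpleGraph (Fin 4) :=
  SimpleGraph.fromRel fun a b => (a.val = 0 ∧ b.val = 1) ∨ (a.val = 2 ∧ b.val = 3)

/-- The 4-cycle. -/
def cycle4 : SimpleGraph (Fin 4) :=
  SimpleGraph.fromRel fun a b =>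
    (a.val = 0 ∧ b.val = 1) ∨ (a.val = 1 ∧ b.val = 2) ∨
    (a.val = 2 ∧ b.val = 3) ∨ (a.val = 3 ∧ b.val = 0)

/-- The path on four vertices. -/
def path4 : SimpleGraph (Fin 4) :=
  SimpleGraph.fromRel fun a b =>
    (a.val = 0 ∧ b.val = 1) ∨ (a.val = 1 ∧ b.val = 2) ∨ (a.val = 2 ∧ b.val = 3)

/-- The 5-cycle. -/
def cycle5 : SimpleGraph (Fin 5) :=
  SimpleGraph.fromRel fun a b =>
    (a.val = 0 ∧ b.val = 1) ∨ (a.val = 1 ∧ b.val = 2) ∨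
    (a.val = 2 ∧ b.val = 3) ∨ (a.val = 3 ∧ b.val = 4) ∨ (a.val = 4 ∧ b.val = 0)

namespace SimpleGraph

variable {V : Type*} (G : SimpleGraph V) [DecidableRel G.Adj]

theorem deg_eq_degree [Fintype V] (v : V) : deg G v = G.degree v := by
  rw [deg, ← card_neighborFinset_eq_degree, ← Set.ncard_coe_finset, coe_neighborFinset]

theorem degree_eq_card_filter_adj_add_card_filter_adj_compl [Fintype V] [DecidableEq V]
    (s : Finset V) (v : V) :
    G.degree v = #{w ∈ s | G.Adj v w} + #{w ∈ sᶜ | G.Adj v w} := by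
  rw [← card_neighborFinset_eq_degree, ← card_filter_add_card_filter_not (· ∈ s)]
  congr 2 <;> ext w <;> simp [and_comm]

theorem card_filter_adj_le_card_sub_one [DecidableEq V] (s : Finset V) {v : V} (hv : v ∈ s) :
    #{w ∈ s | G.Adj v w} ≤ #s - 1 := by
  rw [← card_erase_of_mem hv]
  exact card_le_card fun w hw => by
    simp only [mem_filter] at hw
    exact mem_erase.mpr ⟨hw.2.ne', hw.1⟩

theorem card_filter_adj_le_min [Fintype V] (s : Finset V) (v : V) :
    #{w ∈ s | G.Adj v w} ≤ min #s (G.degree v) := by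
  refine le_min (card_filter_le _ _) ?_
  rw [← card_neighborFinset_eq_degree]
  exact card_le_card fun w hw => by simp_all

theorem isClique_of_forall_card_filter_adj_eq [DecidableEq V] {s : Finset V}
    (h : ∀ v ∈ s, #{w ∈ s | G.Adj v w} = #s - 1) : G.IsClique (s : Set V) := by
  intro v hv w hw hvw
  have hsub : {w ∈ s | G.Adj v w} ⊆ s.erase v := fun u hu => by
    simp only [mem_filter] at hu
    exact mem_erase.mpr ⟨hu.2.ne', hu.1⟩
  have heq : {w ∈ s | G.Adj v w} = s.erase v :=
    eq_of_subset_of_card_le hsub (by rw [card_erase_of_mem hv, h v hv])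
  have hw' : w ∈ {w ∈ s | G.Adj v w} := heq ▸ mem_erase.mpr ⟨hvw.symm, hw⟩
  exact (mem_filter.mp hw').2

theorem sum_degree_eq_sum_card_filter_adj_add_sum_card_filter_adj_compl [Fintype V]
    [DecidableEq V] (s : Finset V) :
    ∑ v ∈ s, G.degree v =
      ∑ v ∈ s, #{w ∈ s | G.Adj v w} + ∑ u ∈ sᶜ, #{w ∈ s | G.Adj u w} := by
  have hcross : ∑ v ∈ s, #{w ∈ sᶜ | G.Adj v w} = ∑ u ∈ sᶜ, #{w ∈ s | G.Adj u w} := by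
    simpa only [bipartiteAbove, bipartiteBelow, G.adj_comm] using
      sum_card_bipartiteAbove_eq_sum_card_bipartiteBelow (s := s) (t := sᶜ) (r := G.Adj)
  rw [← hcross, ← sum_add_distrib]
  exact sum_congr rfl fun v _ => G.degree_eq_card_filter_adj_add_card_filter_adj_compl s v

theorem isClique_of_sum_degree_eq [Fintype V] [DecidableEq V] (s : Finset V)
    (h : ∑ v ∈ s, G.degree v = #s * (#s - 1) + ∑ u ∈ sᶜ, min #s (G.degree u)) :
    G.IsClique (s : Set V) := by
  have hin : ∀ v ∈ s, #{w ∈ s | G.Adj v w} ≤ #s - 1 := fun v hv =>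
    G.card_filter_adj_le_card_sub_one s hv
  have hout : ∑ u ∈ sᶜ, #{w ∈ s | G.Adj u w} ≤ ∑ u ∈ sᶜ, min #s (G.degree u) :=
    sum_le_sum fun u _ => G.card_filter_adj_le_min s u
  have hsum : ∑ v ∈ s, #{w ∈ s | G.Adj v w} = ∑ _v ∈ s, (#s - 1) := by
    have hin_sum := sum_le_sum hin
    have hsplit := G.sum_degree_eq_sum_card_filter_adj_add_sum_card_filter_adj_compl s
    rw [sum_const, smul_eq_mul] at hin_sum ⊢
    omega
  exact G.isClique_of_forall_card_filter_adj_eq ((sum_eq_sum_iff_of_le hin).mp hsum)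

end SimpleGraph

theorem stmt3_general {V : Type*} [Fintype V] [DecidableEq V] (G : SimpleGraph V) (k : ℕ)
    (Q : Finset V) (hcard : Q.card = k)
    (heq : ∑ q ∈ Q, deg G q = k * (k - 1) + ∑ p ∈ Qᶜ, min k (deg G p)) :
    G.IsClique ↑Q := by
  classical
  subst hcard
  simp only [G.deg_eq_degree] at heq
  exact G.isClique_of_sum_degree_eq Q heq

/-- if the `k` vertices of largest degree form a set `Q` attaining
the `k`-th Erdős–Gallai bound with equality, then `Q` is a clique. -/
theorem stmt3 {V : Type*} [Fintype V] [DecidableEq V] (G : SimpleGraph V) (k : ℕ)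
    (Q : Finset V) (hcard : Q.card = k)
    (hmax : ∀ q ∈ Q, ∀ p ∉ Q, deg G p ≤ deg G q)
    (heq : ∑ q ∈ Q, deg G q = k * (k - 1) + ∑ p ∈ Qᶜ, min k (deg G p)) :
    G.IsClique ↑Q :=
  stmt3_general G k Q hcard heq
end

section
/- If a graph H is decomposable in the sense of Tyshkevich, i.e., H is isomorphic to a composition (H_1, A, B) ∘ H_0 where H_1 is a split graph with independent set A and clique B, both H_1 and H_0 have at least one vertex, then the complement of H is also decomposable: specifically, the complement of (H_1, A, B) ∘ H_0 is isomorphic to (complement of H_1, B, A) ∘ (complement of H_0). -/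
open SimpleGraph Finset

theorem IsSplitted.isCompl {α : Type*} {G : SimpleGraph α} {A B : Set α}
    (h : IsSplitted G A B) : IsCompl A B :=
  ⟨h.2.2.2, codisjoint_iff.2 h.2.2.1⟩

theorem compl_comp {α β : Type*} (G : SimpleGraph α) (B : Set α) (H : SimpleGraph β) :
    (comp G B H)ᶜ = comp Gᶜ Bᶜ Hᶜ := by
  ext (a | b) (a' | b') <;> simp [comp]

theorem stmt4_general {α β : Type*} (G : SimpleGraph α) (H : SimpleGraph β) (A B : Set α)
    (hsplit : IsSplitted G A B) :
    Nonempty ((comp G B H)ᶜ ≃g comp Gᶜ A Hᶜ) := by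
  rw [compl_comp, hsplit.isCompl.symm.compl_eq]
  exact ⟨Iso.refl⟩

/-- the complement of a composition `(G, A, B) ∘ H` is the
composition `(Gᶜ, B, A) ∘ Hᶜ`; hence complements of decomposable graphs are
decomposable. -/
theorem stmt4 {α β : Type*} (G : SimpleGraph α) (H : SimpleGraph β) (A B : Set α)
    (hsplit : IsSplitted G A B) (hα : Nonempty α) (hβ : Nonempty β) :
    Nonempty ((comp G B H)ᶜ ≃g comp Gᶜ A Hᶜ) :=
  stmt4_general G H A B hsplit
end

section
/- The composition (G, A, B) ∘ H of a splitted graph (G, A, B) (with A and B nonempty being not required, but G having at least one vertex) and a graph H with at least one vertex contains no induced subgraph isomorphic to 2K_2, C_4, or P_4 having vertices in both V(G) and V(H). -/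
open SimpleGraph Finset

/-!
A vertex of `G` lies either in `B`, and is then adjacent to every vertex of `H`, or in `A`, and
is then adjacent to none of them; moreover `B` is a clique and `A` is independent. An
isomorphism from an induced subgraph transports this labelling to the vertex set of `2K₂`, `C₄` or
`P₄`, and a finite check shows that none of these three graphs carries such a labelling that uses
both `H` and `G`. The underlying reason: in each of them every vertex has a neighbour and a
non-neighbour. A vertex of `B` has its non-neighbours in `A`, a vertex of `A` has its neighbours
in `B`, so the four vertices include some `a ∈ A`, `b ∈ B` and `p ∈ V(H)`, with `b ~ p ≁ a`; the
fourth vertex is then isolated if `a ~ b`, and adjacent to all others if `a ≁ b`.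
-/

inductive CompositionPart
  | inA
  | inB
  | inH
  deriving DecidableEq

instance : Fintype CompositionPart :=
  ⟨{.inA, .inB, .inH}, fun x => by cases x <;> decide⟩

open CompositionPart

def IsCompositionLabelling {V : Type*} (K : SimpleGraph V) (c : V → CompositionPart) : Prop :=
  ∀ u v, u ≠ v →
    (c u = inB → c v = inH → K.Adj u v) ∧
    (c u = inA → c v = inH → ¬ K.Adj u v) ∧
    (c u = inB → c v = inB → K.Adj u v) ∧
    (c u = inA → c v = inA → ¬ K.Adj u v)

def HasMixedCompositionLabelling {V : Type*} (K : SimpleGraph V) : Prop :=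
  ∃ c, IsCompositionLabelling K c ∧ (∃ u, c u = inH) ∧ ∃ u, c u ≠ inH

theorem IsCompositionLabelling.comap {V W : Type*} {K : SimpleGraph V} {L : SimpleGraph W}
    {c : W → CompositionPart} (hc : IsCompositionLabelling L c) (f : K ↪g L) :
    IsCompositionLabelling K (c ∘ f) := by
  intro u v huv
  simpa only [Function.comp_apply, f.map_adj_iff] using hc (f u) (f v) (f.injective.ne huv)

open Classical in
noncomputable def compositionPart {α β : Type*} (B : Set α) : α ⊕ β → CompositionPart
  | .inl a => if a ∈ B then inB else inA
  | .inr _ => inH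

theorem compositionPart_inl_ne_inH {α β : Type*} (B : Set α) (a : α) :
    compositionPart (β := β) B (.inl a) ≠ inH := by
  simp only [compositionPart]
  split_ifs <;> decide

theorem isCompositionLabelling_comp {α β : Type*} {G : SimpleGraph α} {A B : Set α}
    (H : SimpleGraph β) (hsplit : IsSplitted G A B) :
    IsCompositionLabelling (comp G B H) (compositionPart B) := by
  obtain ⟨hA, hB, hcover, -⟩ := hsplit
  have mem_A : ∀ a, a ∉ B → a ∈ A := fun a ha =>
    ((Set.mem_union _ _ _).1 (hcover ▸ Set.mem_univ a)).resolve_right ha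
  rintro (a | b) (a' | b') huv
  · have ha : a ≠ a' := fun h => huv (congrArg _ h)
    simp only [compositionPart]
    split_ifs with h h' h'
    · simp [comp, hB h h' ha]
    · simp
    · simp
    · simp [comp, hA (mem_A a h) (mem_A a' h') ha]
  · simp only [compositionPart]
    split_ifs with h <;> simp [comp, h]
  all_goals simp [compositionPart]

instance : DecidableRel twoK2.Adj := fun a b =>
  inferInstanceAs (Decidable (a ≠ b ∧ _))
instance : DecidableRel cycle4.Adj := fun a b =>
  inferInstanceAs (Decidable (a ≠ b ∧ _))
instance : DecidableRel path4.Adj := fun a b =>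
  inferInstanceAs (Decidable (a ≠ b ∧ _))

theorem not_hasMixedCompositionLabelling_twoK2 : ¬ HasMixedCompositionLabelling twoK2 := by
  unfold HasMixedCompositionLabelling IsCompositionLabelling; decide

theorem not_hasMixedCompositionLabelling_cycle4 : ¬ HasMixedCompositionLabelling cycle4 := by
  unfold HasMixedCompositionLabelling IsCompositionLabelling; decide

theorem not_hasMixedCompositionLabelling_path4 : ¬ HasMixedCompositionLabelling path4 := by
  unfold HasMixedCompositionLabelling IsCompositionLabelling; decide

theorem stmt7_general {α β : Type*} (G : SimpleGraph α) (A B : Set α) (H : SimpleGraph β)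
    (hsplit : IsSplitted G A B)
    (s : Set (α ⊕ β))
    (hiso : Nonempty ((comp G B H).induce s ≃g twoK2) ∨
      Nonempty ((comp G B H).induce s ≃g cycle4) ∨
      Nonempty ((comp G B H).induce s ≃g path4))
    (hG : ∃ a : α, Sum.inl a ∈ s) (hH : ∃ b : β, Sum.inr b ∈ s) : False := by
  obtain ⟨a, ha⟩ := hG
  obtain ⟨b, hb⟩ := hH
  have mixed {K : SimpleGraph (Fin 4)} (e : (comp G B H).induce s ≃g K) :
      HasMixedCompositionLabelling K := by
    refine ⟨_, (isCompositionLabelling_comp H hsplit).comap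
      ((Embedding.induce s).comp e.symm.toEmbedding), ⟨e ⟨_, hb⟩, ?_⟩, ⟨e ⟨_, ha⟩, ?_⟩⟩
    · simp [compositionPart]
    · simpa using compositionPart_inl_ne_inH B a
  rcases hiso with ⟨⟨e⟩⟩ | ⟨⟨e⟩⟩ | ⟨⟨e⟩⟩
  · exact not_hasMixedCompositionLabelling_twoK2 (mixed e)
  · exact not_hasMixedCompositionLabelling_cycle4 (mixed e)
  · exact not_hasMixedCompositionLabelling_path4 (mixed e)

/-- no induced subgraph of a composition `(G, A, B) ∘ H` isomorphic
to `2K₂`, `C₄`, or `P₄` has vertices in both `V(G)` and `V(H)`. -/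
theorem stmt7 {α β : Type*} (G : SimpleGraph α) (A B : Set α) (H : SimpleGraph β)
    (hsplit : IsSplitted G A B) (hα : Nonempty α) (hβ : Nonempty β)
    (s : Set (α ⊕ β))
    (hiso : Nonempty ((comp G B H).induce s ≃g twoK2) ∨
      Nonempty ((comp G B H).induce s ≃g cycle4) ∨
      Nonempty ((comp G B H).induce s ≃g path4))
    (hG : ∃ a : α, Sum.inl a ∈ s) (hH : ∃ b : β, Sum.inr b ∈ s) : False :=
  stmt7_general G A B H hsplit s hiso hG hH
end

section
/- For r ≥ 2 and s ≥ 1, the graph K_{1,r} + sK_2 (disjoint union of a star with r leaves and s disjoint edges) is a unigraph: every finite simple graph with degree sequence (r, 1^{2s+r}) is isomorphic to K_{1,r} + sK_2. -/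
/-!
Let `c` be the vertex of degree `r`. Each neighbour of `c` has degree one, so it is adjacent to
`c` alone: `c` and its neighbourhood span a component isomorphic to `K_{1,r}`. Every other vertex
has exactly one neighbour, which lies outside that component, so the rest of the graph is a perfect
matching, and counting vertices shows that it has `s` edges.
-/

open SimpleGraph Finset

/-- The graph `K_{1,r} + sK₂`: a star with center `0` and leaves `1,…,r`,
together with the `s` disjoint edges `{r+1+2t, r+2+2t}` for `t < s`. -/
def starPlusMatching (r s : ℕ) : SimpleGraph (Fin (2 * s + r + 1)) :=
  SimpleGraph.fromRel fun a b =>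
    (a.val = 0 ∧ 1 ≤ b.val ∧ b.val ≤ r) ∨
    ∃ t < s, a.val = r + 1 + 2 * t ∧ b.val = r + 2 + 2 * t

universe u

namespace SimpleGraph

abbrev starSumMatching (α β : Type*) : SimpleGraph ((Unit ⊕ α) ⊕ β × Bool) :=
  completeBipartiteGraph Unit α ⊕g (⊥ : SimpleGraph β) □ (⊤ : SimpleGraph Bool)

def starSumMatchingCongr {α α' β β' : Type*} (e : α ≃ α') (f : β ≃ β') :
    starSumMatching α β ≃g starSumMatching α' β' :=
  .sumCongr (completeBipartiteGraphCongr (.refl _) e)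
    ⟨f.prodCongr (.refl _), by simp [boxProd_adj]⟩

variable {V : Type u} {W : Type*}

def Iso.sumInduceCompl (G : SimpleGraph V) (s : Set V) [DecidablePred (· ∈ s)]
    (h : ∀ x ∈ s, ∀ y ∉ s, ¬ G.Adj x y) : G.induce s ⊕g G.induce sᶜ ≃g G where
  toEquiv := Equiv.Set.sumCompl s
  map_rel_iff' := by
    rintro (⟨a, ha⟩ | ⟨a, ha⟩) (⟨b, hb⟩ | ⟨b, hb⟩)
    · simp
    · simpa using h a ha b hb
    · simpa using fun hab => h b hb a ha hab.symm
    · simp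

def Iso.completeBipartiteGraphInduceInsertNeighborSet (G : SimpleGraph V) (c : V)
    [DecidablePred (· ∈ G.neighborSet c)]
    (h : ∀ x ∈ G.neighborSet c, ∀ y ∈ G.neighborSet c, ¬ G.Adj x y) :
    completeBipartiteGraph Unit (G.neighborSet c) ≃g
      G.induce (insert c (G.neighborSet c)) where
  toEquiv := (Equiv.sumComm _ _).trans <|
    (Equiv.sumCongr (.refl _) Equiv.punitEquivPUnit).trans
      (Equiv.Set.insert (G.notMem_neighborSet_self (a := c))).symm
  map_rel_iff' := by
    rintro (_ | ⟨a, ha⟩) (_ | ⟨b, hb⟩)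
    · simp
    · simpa using hb
    · simpa [adj_comm] using ha
    · simpa using h a ha b hb

theorem exists_iso_bot_boxProd_top_of_existsUnique_adj {H : SimpleGraph W}
    (h : ∀ x, ∃! y, H.Adj x y) :
    ∃ L : Set W, Nonempty (((⊥ : SimpleGraph L).boxProd (⊤ : SimpleGraph Bool)) ≃g H) := by
  let _ := IsWellOrder.linearOrder (WellOrderingRel (α := W))
  choose p hp using fun x => (h x).exists
  have hadj : ∀ x y, H.Adj x y ↔ y = p x := fun x y =>
    ⟨fun hxy => (h x).unique hxy (hp x), fun hy => hy ▸ hp x⟩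
  have hpp : ∀ x, p (p x) = x := fun x => ((hadj _ _).1 (hp x).symm).symm
  -- each edge `{x, p x}` is indexed by its smaller end
  let L : Set W := {x | x < p x}
  have hLp : ∀ x ∈ L, p x ∉ L := fun x hx hpx => lt_asymm hx (by simpa [L, hpp] using hpx)
  let ψ : L × Bool → W := fun a => bif a.2 then p a.1 else a.1
  have hψp : ∀ a, p (ψ a) = ψ (a.1, !a.2) := by
    rintro ⟨l, _ | _⟩ <;> simp [ψ, hpp]
  have hψinj : ψ.Injective := by
    rintro ⟨⟨l, hl⟩, _ | _⟩ ⟨⟨l', hl'⟩, _ | _⟩ hll' <;>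
      simp only [ψ, cond_true, cond_false] at hll'
    · subst hll'; rfl
    · exact absurd (hll' ▸ hl) (hLp l' hl')
    · exact absurd (hll' ▸ hl') (hLp l hl)
    · obtain rfl : l = l' := by simpa [hpp] using congrArg p hll'
      rfl
  have hψsurj : ψ.Surjective := by
    intro x
    rcases (hp x).ne.lt_or_gt with hx | hx
    · exact ⟨(⟨x, hx⟩, false), rfl⟩
    · exact ⟨(⟨p x, by simpa [L, hpp] using hx⟩, true), by simp [ψ, hpp]⟩
  refine ⟨L, ⟨⟨Equiv.ofBijective ψ ⟨hψinj, hψsurj⟩, ?_⟩⟩⟩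
  rintro ⟨l, b⟩ ⟨l', b'⟩
  change H.Adj (ψ (l, b)) (ψ (l', b')) ↔ _
  rw [hadj, hψp, hψinj.eq_iff]
  cases b <;> cases b' <;> simp [boxProd_adj, eq_comm]

theorem exists_iso_starSumMatching (G : SimpleGraph V) (c : V)
    (hleaf : ∀ w ≠ c, ∃ u, G.neighborSet w = {u}) :
    ∃ β : Type u, Nonempty (G ≃g starSumMatching (G.neighborSet c) β) := by
  classical
  have hN : ∀ x ∈ G.neighborSet c, G.neighborSet x = {c} := by
    intro x hx
    obtain ⟨u, hu⟩ := hleaf x (G.ne_of_adj hx).symm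
    have hcx : c ∈ G.neighborSet x := G.adj_symm hx
    rw [hu, Set.mem_singleton_iff] at hcx
    rw [hu, hcx]
  have hNindep : ∀ x ∈ G.neighborSet c, ∀ y ∈ G.neighborSet c, ¬ G.Adj x y := by
    intro x hx y hy hxy
    have hyc : y ∈ G.neighborSet x := hxy
    rw [hN x hx, Set.mem_singleton_iff] at hyc
    exact G.loopless.irrefl c (hyc ▸ hy)
  set S := insert c (G.neighborSet c)
  have hS : ∀ x ∈ S, ∀ y ∉ S, ¬ G.Adj x y := by
    rintro x (rfl | hx) y hy hxy
    · exact hy (Or.inr hxy)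
    · have hyx : y ∈ G.neighborSet x := hxy
      rw [hN x hx] at hyx
      exact hy (Or.inl hyx)
  have hmatch : ∀ x : ↥Sᶜ, ∃! y : ↥Sᶜ, (G.induce Sᶜ).Adj x y := by
    rintro ⟨x, hx⟩
    obtain ⟨u, hu⟩ := hleaf x fun h => hx (Or.inl h)
    have hxu : u ∈ G.neighborSet x := hu ▸ rfl
    refine ⟨⟨u, fun huS => hS u huS x hx (G.adj_symm hxu)⟩, hxu, fun ⟨y, _⟩ hxy => ?_⟩
    have hyx : y ∈ G.neighborSet x := hxy
    rw [hu] at hyx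
    exact Subtype.ext hyx
  obtain ⟨L, ⟨eM⟩⟩ := exists_iso_bot_boxProd_top_of_existsUnique_adj hmatch
  exact ⟨L, ⟨((Iso.completeBipartiteGraphInduceInsertNeighborSet G c hNindep).sumCongr eM).trans
    (Iso.sumInduceCompl G S hS) |>.symm⟩⟩

end SimpleGraph

theorem exists_lt_matching_edge_iff {r s a b : ℕ} :
    (∃ t < s, a = r + 1 + 2 * t ∧ b = r + 2 + 2 * t) ↔
      r < a ∧ a < r + 1 + 2 * s ∧ (a - r) % 2 = 1 ∧ b = a + 1 := by
  constructor
  · rintro ⟨t, ht, rfl, rfl⟩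
    omega
  · rintro ⟨h₁, h₂, h₃, rfl⟩
    exact ⟨(a - r) / 2, by omega, by omega, by omega⟩

def starSumMatchingToFin (r s : ℕ) : (Unit ⊕ Fin r) ⊕ Fin s × Bool → Fin (2 * s + r + 1)
  | .inl (.inl _) => ⟨0, by omega⟩
  | .inl (.inr i) => ⟨i + 1, by omega⟩
  | .inr (t, b) => ⟨r + 1 + 2 * t + b.toNat, by cases b <;> simp <;> omega⟩

theorem starSumMatchingToFin_injective (r s : ℕ) : (starSumMatchingToFin r s).Injective := by
  rintro ((_ | i) | ⟨t, _ | _⟩) ((_ | j) | ⟨u, _ | _⟩) h <;>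
    simp [starSumMatchingToFin, Fin.ext_iff] at h ⊢ <;> omega

noncomputable def starSumMatchingIsoStarPlusMatching (r s : ℕ) :
    starSumMatching (Fin r) (Fin s) ≃g starPlusMatching r s where
  toEquiv := .ofBijective (starSumMatchingToFin r s) <|
    (Fintype.bijective_iff_injective_and_card _).2
      ⟨starSumMatchingToFin_injective r s, by simp; ring⟩
  map_rel_iff' {a b} := by
    change (starPlusMatching r s).Adj (starSumMatchingToFin r s a)
      (starSumMatchingToFin r s b) ↔ _
    rw [starPlusMatching, fromRel_adj]
    simp only [exists_lt_matching_edge_iff]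
    rcases a with ((_ | i) | ⟨t, _ | _⟩) <;> rcases b with ((_ | j) | ⟨u, _ | _⟩) <;>
      simp [starSumMatchingToFin, Fin.ext_iff, boxProd_adj] <;> omega

theorem stmt13_general (r s : ℕ) {V : Type*} [Fintype V]
    (G : SimpleGraph V) (hcard : Fintype.card V = 2 * s + r + 1)
    (hdeg : ∃ v : V, deg G v = r ∧ ∀ w : V, w ≠ v → deg G w = 1) :
    Nonempty (G ≃g starPlusMatching r s) := by
  obtain ⟨c, hc, hleaf⟩ := hdeg
  obtain ⟨β, ⟨e⟩⟩ := exists_iso_starSumMatching G c fun w hw => Set.ncard_eq_one.1 (hleaf w hw)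
  have hN : Nat.card (G.neighborSet c) = r := (Nat.card_coe_set_eq _).trans hc
  have : Finite β := .of_injective (fun b => e.symm (.inr (b, false))) fun _ _ h => by simpa using h
  have hβ : Nat.card β = s := by
    have hV := Nat.card_congr e.toEquiv
    simp [Nat.card_eq_fintype_card, hN, hcard] at hV
    omega
  exact ⟨e.trans <| (starSumMatchingCongr ((Finite.equivFin _).trans (finCongr hN))
    ((Finite.equivFin β).trans (finCongr hβ))).trans (starSumMatchingIsoStarPlusMatching r s)⟩

/-- for `r ≥ 2` and `s ≥ 1`, the graph `K_{1,r} + sK₂` is a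
unigraph: every graph with degree sequence `(r, 1^{2s+r})` is isomorphic to it. -/
theorem stmt13 (r s : ℕ) (hr : 2 ≤ r) (hs : 1 ≤ s) {V : Type*} [Fintype V]
    (G : SimpleGraph V) (hcard : Fintype.card V = 2 * s + r + 1)
    (hdeg : ∃ v : V, deg G v = r ∧ ∀ w : V, w ≠ v → deg G w = 1) :
    Nonempty (G ≃g starPlusMatching r s) :=
  stmt13_general r s G hcard hdeg
end
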